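/- arXiv:1007.2029 — 7 statements merged into one kernel-verified Lean document; each statement's English description precedes it below -/
import Mathlib

section
/- Let t ≥ 0 and n ≥ 1, and define the family F* = (A_1*, ..., A_n*) where A_i* = {i} ∪ {n+1, ..., n+t} for 1 ≤ i ≤ n. Then the number of SDRs of F* equals ∑_{j=0}^{t} C(t,j) · C(n,j) · j!. -/
open Finset

/-- Number of SDRs of the family `A`. -/
def numSDR {n : ℕ} (A : Fin n → Finset ℕ) : ℕ :=
  ((Fintype.piFinset A).filter Function.Injective).card

/-- `(t,n)`-family: every nonempty union of `k` sets has at least `k + t` elements. -/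
def IsTNFamily (t : ℕ) {n : ℕ} (A : Fin n → Finset ℕ) : Prop :=
  ∀ I : Finset (Fin n), I.Nonempty → I.card + t ≤ (I.biUnion A).card

/-- Valued `(t,n)`-family with valuation `a`. -/
def IsValuedTN (t : ℕ) {n : ℕ} (a : Fin n → ℕ) (A : Fin n → Finset ℕ) : Prop :=
  (∀ i, 0 < a i) ∧ (∀ i, (A i).card = a i + t) ∧
    ∀ I : Finset (Fin n), 2 ≤ I.card → (∑ i ∈ I, a i) + t ≤ (I.biUnion A).card

/-- `I_x = {i : x ∈ A_i}`. -/
def Ix {n : ℕ} (A : Fin n → Finset ℕ) (x : ℕ) : Finset (Fin n) :=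
  Finset.univ.filter fun i => x ∈ A i

/-- `{x,y}` is exclusive. -/
def Exclusive {n : ℕ} (A : Fin n → Finset ℕ) (x y : ℕ) : Prop :=
  (Ix A x \ Ix A y).Nonempty ∧ (Ix A y \ Ix A x).Nonempty

/-- `{x,y}` is saturated. -/
def Saturated (t : ℕ) {n : ℕ} (a : Fin n → ℕ) (A : Fin n → Finset ℕ) (x y : ℕ) : Prop :=
  ∃ I : Finset (Fin n),
    I ∩ Ix A x ∩ Ix A y = ∅ ∧ (I ∩ (Ix A x \ Ix A y)).Nonempty ∧
    (I ∩ (Ix A y \ Ix A x)).Nonempty ∧ (I.biUnion A).card = (∑ i ∈ I, a i) + t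

/-- The modified family `F_y^x`: replace `x` by `y` in each `A_i` with `i ∈ I_x ∩ I_y^c`. -/
def swapFam {n : ℕ} (A : Fin n → Finset ℕ) (x y : ℕ) : Fin n → Finset ℕ :=
  fun i => if x ∈ A i ∧ y ∉ A i then insert y (A i \ {x}) else A i

def U (t n : ℕ) : ℕ := ∑ j ∈ Finset.range (t + 1), t.choose j * n.choose j * j.factorial

/-- The extremal family `F*`: `A_i* = {i} ∪ {n+1, …, n+t}` (index `i : Fin n` stands for `i+1`). -/
def Astar (t n : ℕ) : Fin n → Finset ℕ := fun i => insert ((i : ℕ) + 1) (Finset.Ioc n (n + t))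

/-- `∑_{i < j} a_i a_j`. -/
def pairSum {n : ℕ} (a : Fin n → ℕ) : ℕ :=
  ∑ p ∈ Finset.univ.filter (fun p : Fin n × Fin n => p.1 < p.2), a p.1 * a p.2

/-- Elementary symmetric polynomial `e_k(a_1,…,a_n)`. -/
def esymm {n : ℕ} (a : Fin n → ℕ) (k : ℕ) : ℕ :=
  ∑ S ∈ Finset.univ.powersetCard k, ∏ i ∈ S, a i

/-!
Each `A_i*` consists of a private element `i` and the common block `T = {n+1, …, n+t}`.
An SDR is determined by the set `S` of indices that choose from `T` together with an injection
`S ↪ T`: the remaining indices are forced to take their private elements, which never collide.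
Hence `N(F*) = ∑_S (t)_{#S} = ∑_j C(n,j) (t)_j = ∑_j C(t,j) C(n,j) j!`.
-/

open Function Fintype

section PrivatePlusCommon

variable {ι : Type*} {p : ι → ℕ} {T : Finset ℕ}

def commonIndices [Fintype ι] (T : Finset ℕ) (x : ι → ℕ) : Finset ι :=
  univ.filter fun i => x i ∈ T

theorem mem_commonIndices [Fintype ι] {x : ι → ℕ} {i : ι} :
    i ∈ commonIndices T x ↔ x i ∈ T := by
  simp [commonIndices]

variable [DecidableEq ι]

def extendByPrivate (p : ι → ℕ) (S : Finset ι) (e : S ↪ T) : ι → ℕ :=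
  fun i => if h : i ∈ S then e ⟨i, h⟩ else p i

theorem extendByPrivate_of_mem {S : Finset ι} (e : S ↪ T) {i : ι} (h : i ∈ S) :
    extendByPrivate p S e i = e ⟨i, h⟩ :=
  dif_pos h

theorem extendByPrivate_of_notMem {S : Finset ι} (e : S ↪ T) {i : ι} (h : i ∉ S) :
    extendByPrivate p S e i = p i :=
  dif_neg h

theorem extendByPrivate_mem_piFinset [Fintype ι] (S : Finset ι) (e : S ↪ T) :
    extendByPrivate p S e ∈ piFinset fun i => insert (p i) T := by
  refine mem_piFinset.2 fun i => ?_
  by_cases h : i ∈ S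
  · rw [extendByPrivate_of_mem e h]
    exact mem_insert_of_mem (e _).2
  · rw [extendByPrivate_of_notMem e h]
    exact mem_insert_self _ _

theorem commonIndices_extendByPrivate [Fintype ι] (hpT : ∀ i, p i ∉ T) (S : Finset ι)
    (e : S ↪ T) : commonIndices T (extendByPrivate p S e) = S := by
  ext i
  rw [mem_commonIndices]
  by_cases h : i ∈ S
  · simp [extendByPrivate_of_mem e h, h]
  · simpa [extendByPrivate_of_notMem e h, h] using hpT i

theorem extendByPrivate_injective (hp : Injective p) (hpT : ∀ i, p i ∉ T)
    (S : Finset ι) (e : S ↪ T) : Injective (extendByPrivate p S e) := by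
  intro i j hij
  unfold extendByPrivate at hij
  split_ifs at hij with hi hj hj
  · exact congrArg Subtype.val (e.injective (Subtype.ext hij))
  · exact absurd (hij ▸ (e _).2) (hpT j)
  · exact absurd (hij ▸ (e _).2) (hpT i)
  · exact hp hij

theorem eq_extendByPrivate [Fintype ι] {x : ι → ℕ} (hx : x ∈ piFinset fun i => insert (p i) T)
    {S : Finset ι} (hS : commonIndices T x = S) (e : S ↪ T) (he : ∀ i : S, (e i : ℕ) = x i) :
    extendByPrivate p S e = x := by
  subst hS
  funext i
  by_cases h : i ∈ commonIndices T x
  · exact (extendByPrivate_of_mem e h).trans (he ⟨i, h⟩)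
  · rw [extendByPrivate_of_notMem e h]
    exact ((mem_insert.1 (mem_piFinset.1 hx i)).resolve_right
      (mt mem_commonIndices.2 h)).symm

theorem card_sdrs_with_commonIndices [Fintype ι] (hp : Injective p) (hpT : ∀ i, p i ∉ T)
    (S : Finset ι) :
    #{x ∈ (piFinset fun i => insert (p i) T).filter Injective | commonIndices T x = S} =
      (#T).descFactorial #S := by
  rw [← Fintype.card_coe S, ← Fintype.card_coe T, ← card_embedding_eq, ← card_univ]
  symm
  refine card_bij' (fun e _ => extendByPrivate p S e)
    (fun x hx => ⟨fun i => ⟨x i, mem_commonIndices.1 ((mem_filter.1 hx).2 ▸ i.2)⟩,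
      fun i j hij => Subtype.ext ((mem_filter.1 (mem_filter.1 hx).1).2
        (congrArg Subtype.val hij))⟩) ?_ (fun _ _ => mem_univ _) ?_ ?_
  · intro e _
    simp only [mem_filter]
    exact ⟨⟨extendByPrivate_mem_piFinset S e, extendByPrivate_injective hp hpT S e⟩,
      commonIndices_extendByPrivate hpT S e⟩
  · intro e _
    ext i
    exact extendByPrivate_of_mem e i.2
  · intro x hx
    obtain ⟨⟨hxA, -⟩, hxS⟩ := by simpa only [mem_filter] using hx
    exact eq_extendByPrivate hxA hxS _ fun _ => rfl

theorem card_sdrs_insert_eq_sum_powerset [Fintype ι] (hp : Injective p) (hpT : ∀ i, p i ∉ T) :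
    #((piFinset fun i => insert (p i) T).filter Injective) =
      ∑ S ∈ (univ : Finset ι).powerset, (#T).descFactorial #S := by
  rw [card_eq_sum_card_fiberwise (f := commonIndices T) (t := (univ : Finset ι).powerset)
    (fun _ _ => by simp)]
  exact sum_congr rfl fun S _ => card_sdrs_with_commonIndices hp hpT S

end PrivatePlusCommon

theorem sum_range_eq_of_eq_zero {M : Type*} [AddCommMonoid M] {f : ℕ → M} {m k : ℕ} (hm : ∀ j, m < j → f j = 0)
    (hk : ∀ j, k < j → f j = 0) : ∑ j ∈ range (m + 1), f j = ∑ j ∈ range (k + 1), f j := by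
  have extend : ∀ a ≤ m + k, (∀ j, a < j → f j = 0) →
      ∑ j ∈ range (a + 1), f j = ∑ j ∈ range (m + k + 1), f j := fun a ha hf =>
    sum_subset (range_subset_range.2 (by omega)) fun j _ hj => hf j (by simpa using hj)
  rw [extend m (by omega) hm, extend k (by omega) hk]

theorem sum_choose_mul_descFactorial (t n : ℕ) :
    ∑ j ∈ range (n + 1), n.choose j * t.descFactorial j = U t n := by
  have term : ∀ j, n.choose j * t.descFactorial j = t.choose j * n.choose j * j.factorial := by
    intro j
    rw [Nat.descFactorial_eq_factorial_mul_choose]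
    ring
  simp_rw [term]
  exact sum_range_eq_of_eq_zero (fun j hj => by simp [Nat.choose_eq_zero_of_lt hj])
    (fun j hj => by simp [Nat.choose_eq_zero_of_lt hj])

theorem numSDR_Astar_general (t n : ℕ) :
    numSDR (Astar t n) = U t n := by
  have private_injective : Injective fun i : Fin n => (i : ℕ) + 1 :=
    fun i j h => Fin.ext (Nat.succ_injective h)
  have private_notMem_common : ∀ i : Fin n, (i : ℕ) + 1 ∉ Ioc n (n + t) := fun i h =>
    (mem_Ioc.1 h).1.not_ge i.isLt
  unfold numSDR Astar
  rw [card_sdrs_insert_eq_sum_powerset private_injective private_notMem_common,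
    sum_powerset_apply_card (fun k => (#(Ioc n (n + t))).descFactorial k)]
  simpa using sum_choose_mul_descFactorial t n

theorem numSDR_Astar (t n : ℕ) (hn : 1 ≤ n) :
    numSDR (Astar t n) = U t n :=
  numSDR_Astar_general t n
end

section
/- Every (1,n)-family has at least n+1 SDRs, and this bound is attained, i.e., M(1,n) = n + 1. -/
open Finset

/-!
Splitting the index set as `I = I₀ ∪ (I \ I₀)`, the SDRs of `I` are the SDRs `f` of `I₀` followed
by SDRs of the rest of the family with `f(I₀)` deleted. When every `f` extends, this gives
`N(I) + 1 ≥ N(I₀) + N_f(I \ I₀)` for each single `f`, so by induction it suffices to find a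
nonempty `I₀ ⊆ I` and an `f` for which both pieces are again families with surplus one.
If some proper `I₀` is critical (`|A(I₀)| = |I₀| + 1`), take one of maximal size: maximality
keeps the surplus of the proper parts of the rest, and choosing `f` to avoid an element shared by
`A(I₀)` and `A(I \ I₀)` handles the whole complement. Otherwise every proper subfamily has
surplus two and `I₀` can be any singleton.
The bound is attained by `A_i = {i, n + 1}`, whose SDRs are determined by which index, if any,
takes `n + 1`.
-/

namespace SDR

variable {ι α : Type*} [DecidableEq α]

section Surplus

def SurplusOn (s : ℕ) (A : ι → Finset α) (I : Finset ι) : Prop :=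
  ∀ J ⊆ I, J.Nonempty → #J + s ≤ #(J.biUnion A)

variable {s k : ℕ} {A : ι → Finset α} {I J : Finset ι}

theorem SurplusOn.mono (h : SurplusOn s A I) (hJI : J ⊆ I) : SurplusOn s A J :=
  fun K hK => h K (hK.trans hJI)

theorem biUnion_sdiff_right (A : ι → Finset α) (X : Finset α) (J : Finset ι) :
    J.biUnion (fun j => A j \ X) = J.biUnion A \ X := by
  ext x
  simp only [mem_biUnion, mem_sdiff]
  tauto

theorem SurplusOn.sdiff {X : Finset α} (h : SurplusOn (s + k) A I) (hX : #X ≤ k) :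
    SurplusOn s (fun j => A j \ X) I := by
  intro J hJ hJne
  have := h J hJ hJne
  have := card_le_card_sdiff_add_card (s := J.biUnion A) (t := X)
  rw [biUnion_sdiff_right]
  omega

end Surplus

variable [DecidableEq ι] [Fintype ι] [Zero α]

/-- SDRs of the subfamily `(A i)_{i ∈ I}`, extended by `0` outside `I`. -/
def sdrOn (A : ι → Finset α) (I : Finset ι) : Finset (ι → α) :=
  (Fintype.piFinset fun i => if i ∈ I then A i else {0}).filter fun f => Set.InjOn f I

variable {A : ι → Finset α} {I I₀ : Finset ι} {f : ι → α}

theorem mem_sdrOn :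
    f ∈ sdrOn A I ↔ (∀ i ∈ I, f i ∈ A i) ∧ (∀ i ∉ I, f i = 0) ∧ Set.InjOn f I := by
  simp only [sdrOn, mem_filter, Fintype.mem_piFinset, ← and_assoc]
  refine and_congr_left' ⟨fun h => ⟨fun i hi => ?_, fun i hi => ?_⟩, fun h i => ?_⟩
  · simpa [hi] using h i
  · simpa [hi] using h i
  · by_cases hi : i ∈ I <;> simp [hi, h.1, h.2]

theorem sdrOn_nonempty {s : ℕ} (h : SurplusOn s A I) : (sdrOn A I).Nonempty := by
  classical
  obtain ⟨f, hf, hfA⟩ := (all_card_le_biUnion_card_iff_existsInjective' fun i : I => A i).mp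
    fun S => by
      rcases S.eq_empty_or_nonempty with rfl | hS
      · simp
      have := h (S.image (↑)) (fun i hi => by obtain ⟨j, -, rfl⟩ := mem_image.1 hi; exact j.2)
          (hS.image _)
      rw [card_image_of_injective S Subtype.coe_injective, image_biUnion] at this
      omega
  refine ⟨fun i => if hi : i ∈ I then f ⟨i, hi⟩ else 0,
    mem_sdrOn.2 ⟨fun i hi => ?_, fun i hi => ?_, ?_⟩⟩
  · simpa [hi] using hfA ⟨i, hi⟩
  · simp [hi]
  · intro i hi j hj hij
    simp only [mem_coe] at hi hj
    simp only [dif_pos hi, dif_pos hj] at hij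
    exact congrArg Subtype.val (hf hij)

theorem sdrOn_mono {B : ι → Finset α} (h : ∀ i, B i ⊆ A i) : sdrOn B I ⊆ sdrOn A I := by
  intro f hf
  obtain ⟨hB, h0, hinj⟩ := mem_sdrOn.1 hf
  exact mem_sdrOn.2 ⟨fun i hi => h i (hB i hi), h0, hinj⟩

theorem card_sdrOn_empty : #(sdrOn A ∅) = 1 := by
  rw [card_eq_one]
  exact ⟨0, eq_singleton_iff_unique_mem.2 ⟨mem_sdrOn.2 (by simp), fun f hf => funext
    fun i => (mem_sdrOn.1 hf).2.1 i (notMem_empty i)⟩⟩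

theorem card_sdrOn_singleton (i₀ : ι) : #(sdrOn A {i₀}) = #(A i₀) := by
  refine card_bij' (fun f _ => f i₀) (fun x _ => Pi.single i₀ x) (fun f hf => ?_)
    (fun x hx => ?_) (fun f hf => ?_) (fun x _ => by simp)
  · exact (mem_sdrOn.1 hf).1 i₀ (mem_singleton_self i₀)
  · refine mem_sdrOn.2 ⟨by simpa using hx, fun i hi => ?_, by simp⟩
    simp [(mem_singleton.not.1 hi)]
  · funext i
    by_cases hi : i = i₀
    · subst hi; simp
    · simp [hi, (mem_sdrOn.1 hf).2.1 i (by simpa using hi)]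

theorem piecewise_zero_mem_sdrOn {g : ι → α} (hI₀ : I₀ ⊆ I) (hg : g ∈ sdrOn A I) :
    I₀.piecewise g 0 ∈ sdrOn A I₀ := by
  obtain ⟨hA, -, hinj⟩ := mem_sdrOn.1 hg
  refine mem_sdrOn.2 ⟨fun i hi => ?_, fun i hi => by simp [hi], fun i hi j hj hij => ?_⟩
  · simpa [hi] using hA i (hI₀ hi)
  · simp only [mem_coe] at hi hj
    simp only [piecewise_eq_of_mem _ _ _ hi, piecewise_eq_of_mem _ _ _ hj] at hij
    exact hinj (hI₀ hi) (hI₀ hj) hij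

theorem zero_piecewise_mem_sdrOn {g : ι → α} (hI₀ : I₀ ⊆ I) (hg : g ∈ sdrOn A I) :
    I₀.piecewise (0 : ι → α) g ∈ sdrOn (fun j => A j \ I₀.image (I₀.piecewise g 0)) (I \ I₀) := by
  obtain ⟨hA, h0, hinj⟩ := mem_sdrOn.1 hg
  refine mem_sdrOn.2 ⟨fun i hi => ?_, fun i hi => ?_, fun i hi j hj hij => ?_⟩
  · obtain ⟨hiI, hiI₀⟩ := mem_sdiff.1 hi
    rw [piecewise_eq_of_notMem _ _ _ hiI₀, mem_sdiff]
    refine ⟨hA i hiI, fun hmem => ?_⟩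
    obtain ⟨j, hj, hji⟩ := mem_image.1 hmem
    rw [piecewise_eq_of_mem _ _ _ hj] at hji
    exact hiI₀ (hinj (hI₀ hj) hiI hji ▸ hj)
  · by_cases hiI₀ : i ∈ I₀
    · simp [hiI₀]
    · simp [hiI₀, h0 i (by simpa [hiI₀] using hi)]
  · obtain ⟨hiI, hiI₀⟩ := mem_sdiff.1 (mem_coe.1 hi)
    obtain ⟨hjI, hjI₀⟩ := mem_sdiff.1 (mem_coe.1 hj)
    rw [piecewise_eq_of_notMem _ _ _ hiI₀, piecewise_eq_of_notMem _ _ _ hjI₀] at hij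
    exact hinj hiI hjI hij

theorem piecewise_mem_sdrOn {g : ι → α} (hI₀ : I₀ ⊆ I) (hf : f ∈ sdrOn A I₀)
    (hg : g ∈ sdrOn (fun j => A j \ I₀.image f) (I \ I₀)) : I₀.piecewise f g ∈ sdrOn A I := by
  obtain ⟨hfA, hf0, hfinj⟩ := mem_sdrOn.1 hf
  obtain ⟨hgA, hg0, hginj⟩ := mem_sdrOn.1 hg
  have hg_avoid : ∀ i ∈ I \ I₀, ∀ j ∈ I₀, g i ≠ f j := fun i hi j hj hij =>
    (mem_sdiff.1 (hgA i hi)).2 (mem_image.2 ⟨j, hj, hij.symm⟩)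
  refine mem_sdrOn.2 ⟨fun i hi => ?_, fun i hi => ?_, fun i hi j hj hij => ?_⟩
  · by_cases hi₀ : i ∈ I₀
    · simpa [hi₀] using hfA i hi₀
    · simpa [hi₀] using (mem_sdiff.1 (hgA i (mem_sdiff.2 ⟨hi, hi₀⟩))).1
  · rw [piecewise_eq_of_notMem _ _ _ fun h => hi (hI₀ h)]
    exact hg0 i fun h => hi (mem_sdiff.1 h).1
  · simp only [mem_coe] at hi hj
    by_cases hi₀ : i ∈ I₀ <;> by_cases hj₀ : j ∈ I₀ <;>
      simp only [hi₀, hj₀, piecewise_eq_of_mem, piecewise_eq_of_notMem, not_false_eq_true]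
        at hij
    · exact hfinj hi₀ hj₀ hij
    · exact absurd hij.symm (hg_avoid j (mem_sdiff.2 ⟨hj, hj₀⟩) i hi₀)
    · exact absurd hij (hg_avoid i (mem_sdiff.2 ⟨hi, hi₀⟩) j hj₀)
    · exact hginj (mem_sdiff.2 ⟨hi, hi₀⟩) (mem_sdiff.2 ⟨hj, hj₀⟩) hij

theorem card_sdrOn_eq_sum (hI₀ : I₀ ⊆ I) :
    #(sdrOn A I) = ∑ f ∈ sdrOn A I₀, #(sdrOn (fun j => A j \ I₀.image f) (I \ I₀)) := by
  rw [← card_sigma]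
  refine card_bij' (fun g _ => ⟨I₀.piecewise g 0, I₀.piecewise 0 g⟩)
    (fun p _ => I₀.piecewise p.1 p.2) (fun g hg => ?_) (fun p hp => ?_) (fun g _ => ?_)
    (fun p hp => ?_)
  · exact mem_sigma.2 ⟨piecewise_zero_mem_sdrOn hI₀ hg, zero_piecewise_mem_sdrOn hI₀ hg⟩
  · obtain ⟨hf, hg⟩ := mem_sigma.1 hp
    exact piecewise_mem_sdrOn hI₀ hf hg
  · ext i
    by_cases hi : i ∈ I₀ <;> simp [hi]
  · obtain ⟨hf, hg⟩ := mem_sigma.1 hp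
    have hf0 := (mem_sdrOn.1 hf).2.1
    have hg0 := (mem_sdrOn.1 hg).2.1
    ext i
    · by_cases hi : i ∈ I₀ <;> simp [hi, hf0]
    · refine heq_of_eq (funext fun i => ?_)
      by_cases hi : i ∈ I₀ <;> simp [hi, hg0]

theorem image_subset_biUnion_of_mem_sdrOn (hf : f ∈ sdrOn A I₀) : I₀.image f ⊆ I₀.biUnion A :=
  image_subset_iff.2 fun i hi => mem_biUnion.2 ⟨i, hi, (mem_sdrOn.1 hf).1 i hi⟩

theorem card_biUnion_union_le (hf : f ∈ sdrOn A I₀) (J : Finset ι) :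
    #((I₀ ∪ J).biUnion A) ≤ #(J.biUnion fun j => A j \ I₀.image f) + #(I₀.biUnion A) := by
  rw [union_biUnion, biUnion_sdiff_right]
  refine (card_le_card fun x hx => ?_).trans (card_union_le _ _)
  simp only [mem_union, mem_sdiff] at hx ⊢
  by_cases hxf : x ∈ I₀.image f
  · exact Or.inr (image_subset_biUnion_of_mem_sdrOn hf hxf)
  · tauto

theorem card_add_one_le_card_sdrOn_of_split (hI₀ : I₀ ⊆ I)
    (hext : ∀ g ∈ sdrOn A I₀, (sdrOn (fun j => A j \ I₀.image g) (I \ I₀)).Nonempty)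
    (hf : f ∈ sdrOn A I₀) (h₀ : #I₀ + 1 ≤ #(sdrOn A I₀))
    (h₁ : #(I \ I₀) + 1 ≤ #(sdrOn (fun j => A j \ I₀.image f) (I \ I₀))) :
    #I + 1 ≤ #(sdrOn A I) := by
  have hrest : #((sdrOn A I₀).erase f) ≤
      ∑ g ∈ (sdrOn A I₀).erase f, #(sdrOn (fun j => A j \ I₀.image g) (I \ I₀)) := by
    rw [card_eq_sum_ones]
    exact sum_le_sum fun g hg => (hext g (mem_of_mem_erase hg)).card_pos
  have := card_erase_add_one hf
  have := card_sdiff_add_card_eq_card hI₀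
  rw [card_sdrOn_eq_sum hI₀, ← add_sum_erase _ _ hf]
  omega

theorem SurplusOn.sdiff_image_of_critical (h : SurplusOn 1 A I) (hI₀I : I₀ ⊆ I)
    (hI₀ : I₀.Nonempty) (hcrit : #(I₀.biUnion A) ≤ #I₀ + 1) (hf : f ∈ sdrOn A I₀) :
    SurplusOn 0 (fun j => A j \ I₀.image f) (I \ I₀) := by
  intro J hJ _
  have hdisj : Disjoint I₀ J := disjoint_of_subset_right hJ disjoint_sdiff
  have hJ₀ := h (I₀ ∪ J) (union_subset hI₀I (hJ.trans sdiff_subset)) (hI₀.mono subset_union_left)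
  have := card_biUnion_union_le hf J
  rw [card_union_of_disjoint hdisj] at hJ₀
  omega

theorem exists_mem_sdrOn_card_compl_lt (h : SurplusOn 1 A I) (hI₀I : I₀ ⊂ I)
    (hcrit : #(I₀.biUnion A) ≤ #I₀ + 1) :
    ∃ f ∈ sdrOn A I₀, #(I \ I₀) + 1 ≤ #((I \ I₀).biUnion fun j => A j \ I₀.image f) := by
  set K := I \ I₀
  have hK : K.Nonempty := sdiff_nonempty.2 hI₀I.2
  by_cases hd : Disjoint (K.biUnion A) (I₀.biUnion A)
  · obtain ⟨f, hf⟩ := sdrOn_nonempty (h.mono hI₀I.subset)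
    refine ⟨f, hf, ?_⟩
    rw [biUnion_sdiff_right,
      sdiff_eq_self_of_disjoint (hd.mono_right (image_subset_biUnion_of_mem_sdrOn hf))]
    exact h K sdiff_subset hK
  obtain ⟨t, htK, htI₀⟩ := not_disjoint_iff.1 hd
  obtain ⟨f, hf⟩ := sdrOn_nonempty ((h.mono hI₀I.subset).sdiff (X := {t}) (card_singleton t).le)
  have hfA : f ∈ sdrOn A I₀ := sdrOn_mono (fun i => sdiff_subset) hf
  have htf : t ∉ I₀.image f := fun ht => by
    obtain ⟨i, hi, rfl⟩ := mem_image.1 ht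
    exact (mem_sdiff.1 ((mem_sdrOn.1 hf).1 i hi)).2 (mem_singleton_self _)
  have hsub : insert t (K.biUnion A \ I₀.biUnion A) ⊆ K.biUnion fun j => A j \ I₀.image f := by
    rw [biUnion_sdiff_right]
    exact insert_subset (mem_sdiff.2 ⟨htK, htf⟩)
      (sdiff_subset_sdiff subset_rfl (image_subset_biUnion_of_mem_sdrOn hfA))
  have hI : #(I.biUnion A) ≤ #(K.biUnion A \ I₀.biUnion A) + #(I₀.biUnion A) := by
    rw [← union_sdiff_of_subset hI₀I.subset, union_biUnion, union_comm,
      ← sdiff_union_self_eq_union]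
    exact card_union_le _ _
  refine ⟨f, hfA, ?_⟩
  have := h I subset_rfl (hK.mono sdiff_subset)
  have := card_le_card hsub
  rw [card_insert_of_notMem fun ht => (mem_sdiff.1 ht).2 htI₀] at this
  have : #K + #I₀ = #I := card_sdiff_add_card_eq_card hI₀I.subset
  omega

theorem exists_mem_sdrOn_surplusOn_of_maximal_critical (h : SurplusOn 1 A I) (hI₀I : I₀ ⊂ I)
    (hcrit : #(I₀.biUnion A) ≤ #I₀ + 1)
    (hmax : ∀ J ⊂ I, J.Nonempty → #(J.biUnion A) ≤ #J + 1 → #J ≤ #I₀) :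
    ∃ f ∈ sdrOn A I₀, SurplusOn 1 (fun j => A j \ I₀.image f) (I \ I₀) := by
  obtain ⟨f, hf, hcompl⟩ := exists_mem_sdrOn_card_compl_lt h hI₀I hcrit
  refine ⟨f, hf, fun J hJ hJne => ?_⟩
  by_cases hJK : I \ I₀ ⊆ J
  · rwa [hJK.antisymm' hJ]
  have hdisj : Disjoint I₀ J := disjoint_of_subset_right hJ disjoint_sdiff
  have hJI : I₀ ∪ J ⊂ I :=
    ⟨union_subset hI₀I.subset (hJ.trans sdiff_subset), fun hIJ => hJK (sdiff_le_iff.2 hIJ)⟩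
  have hJ₀ : #(I₀ ∪ J) + 2 ≤ #((I₀ ∪ J).biUnion A) := by
    by_contra! hlt
    have := hmax _ hJI (hJne.mono subset_union_right) (by omega)
    rw [card_union_of_disjoint hdisj] at this
    have := hJne.card_pos
    omega
  have := card_biUnion_union_le hf J
  rw [card_union_of_disjoint hdisj] at hJ₀
  omega

theorem card_add_one_le_card_sdrOn (h : SurplusOn 1 A I) : #I + 1 ≤ #(sdrOn A I) := by
  induction I using Finset.strongInduction generalizing A with | H I ih =>
  rcases I.eq_empty_or_nonempty with rfl | hI
  · simp [card_sdrOn_empty]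
  by_cases hcrit : ∃ J ⊂ I, J.Nonempty ∧ #(J.biUnion A) ≤ #J + 1
  · obtain ⟨I₀, hI₀mem, hmax⟩ := exists_max_image
      (I.ssubsets.filter fun J => J.Nonempty ∧ #(J.biUnion A) ≤ #J + 1) card
      (by obtain ⟨J, hJ, hJc⟩ := hcrit; exact ⟨J, mem_filter.2 ⟨mem_ssubsets.2 hJ, hJc⟩⟩)
    simp only [mem_filter, mem_ssubsets, and_imp] at hI₀mem hmax
    obtain ⟨hI₀I, hI₀, hcrit₀⟩ := hI₀mem
    obtain ⟨f, hf, hsurplus⟩ := exists_mem_sdrOn_surplusOn_of_maximal_critical h hI₀I hcrit₀ hmax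
    exact card_add_one_le_card_sdrOn_of_split hI₀I.subset
      (fun g hg => sdrOn_nonempty (h.sdiff_image_of_critical hI₀I.subset hI₀ hcrit₀ hg)) hf
      (ih I₀ hI₀I (h.mono hI₀I.subset)) (ih _ (sdiff_ssubset hI₀I.subset hI₀) hsurplus)
  push Not at hcrit
  obtain ⟨i₀, hi₀⟩ := hI
  have hi₀I : {i₀} ⊆ I := singleton_subset_iff.2 hi₀
  have h₂ : SurplusOn 2 A (I \ {i₀}) := fun J hJ hJne =>
    hcrit J (hJ.trans_ssubset (sdiff_ssubset hi₀I (singleton_nonempty _))) hJne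
  have himage (g : ι → α) : #(({i₀} : Finset ι).image g) ≤ 1 :=
    card_image_le.trans_eq (card_singleton _)
  obtain ⟨f, hf⟩ := sdrOn_nonempty (h.mono hi₀I)
  refine card_add_one_le_card_sdrOn_of_split hi₀I
    (fun g _ => sdrOn_nonempty ((h.mono sdiff_subset).sdiff (himage g))) hf ?_
    (ih _ (sdiff_ssubset hi₀I (singleton_nonempty _)) (h₂.sdiff (himage f)))
  rw [card_sdrOn_singleton, card_singleton]
  simpa using h {i₀} hi₀I (singleton_nonempty _)

end SDR

theorem numSDR_eq_card_sdrOn {n : ℕ} (A : Fin n → Finset ℕ) :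
    numSDR A = #(SDR.sdrOn A univ) := by
  unfold numSDR
  congr 1
  ext f
  simp [SDR.mem_sdrOn, Set.injOn_univ]

theorem IsTNFamily.succ_le_numSDR {n : ℕ} {A : Fin n → Finset ℕ} (hA : IsTNFamily 1 A) :
    n + 1 ≤ numSDR A := by
  simpa [numSDR_eq_card_sdrOn] using SDR.card_add_one_le_card_sdrOn (I := univ) fun J _ => hA J

theorem mem_Astar_one {n : ℕ} {i : Fin n} {x : ℕ} : x ∈ Astar 1 n i ↔ x = i + 1 ∨ x = n + 1 := by
  simp only [Astar, mem_insert, mem_Ioc]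
  omega

theorem isTNFamily_Astar_one (n : ℕ) : IsTNFamily 1 (Astar 1 n) := by
  rintro J ⟨i, hi⟩
  have hsub : insert (n + 1) (J.image fun j : Fin n => (j : ℕ) + 1) ⊆ J.biUnion (Astar 1 n) :=
    insert_subset (mem_biUnion.2 ⟨i, hi, mem_Astar_one.2 (Or.inr rfl)⟩) fun x hx => by
      obtain ⟨j, hj, rfl⟩ := mem_image.1 hx
      exact mem_biUnion.2 ⟨j, hj, mem_Astar_one.2 (Or.inl rfl)⟩
  have hnot : n + 1 ∉ J.image fun j : Fin n => (j : ℕ) + 1 := by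
    simp only [mem_image, not_exists, not_and]
    omega
  refine le_trans ?_ (card_le_card hsub)
  rw [card_insert_of_notMem hnot,
    card_image_of_injective _ fun a b hab => Fin.ext (Nat.add_right_cancel hab)]

theorem numSDR_Astar_one_le (n : ℕ) : numSDR (Astar 1 n) ≤ n + 1 := by
  let φ : Option (Fin n) → Fin n → ℕ := fun o i => if o = some i then n + 1 else i + 1
  calc numSDR (Astar 1 n) ≤ #(univ.image φ) := card_le_card fun f hf => ?_
    _ ≤ n + 1 := card_image_le.trans (by simp)
  simp only [mem_filter, Fintype.mem_piFinset, mem_Astar_one] at hf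
  obtain ⟨hmem, hinj⟩ := hf
  by_cases hex : ∃ k, f k = n + 1
  · obtain ⟨k, hk⟩ := hex
    refine mem_image.2 ⟨some k, mem_univ _, funext fun i => ?_⟩
    by_cases hki : k = i
    · simp [φ, ← hki, hk]
    · simp only [φ, Option.some_inj, hki, if_false]
      exact ((hmem i).resolve_right fun h => hki (hinj (hk.trans h.symm))).symm
  · push Not at hex
    exact mem_image.2 ⟨none, mem_univ _, funext fun i => ((hmem i).resolve_right (hex i)).symm⟩

theorem M_one_n_general (n : ℕ) :
    (∀ A : Fin n → Finset ℕ, IsTNFamily 1 A → n + 1 ≤ numSDR A) ∧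
      ∃ A : Fin n → Finset ℕ, IsTNFamily 1 A ∧ numSDR A = n + 1 :=
  ⟨fun _ hA => hA.succ_le_numSDR, Astar 1 n, isTNFamily_Astar_one n,
    (numSDR_Astar_one_le n).antisymm (isTNFamily_Astar_one n).succ_le_numSDR⟩

theorem M_one_n (n : ℕ) (hn : 1 ≤ n) :
    (∀ A : Fin n → Finset ℕ, IsTNFamily 1 A → n + 1 ≤ numSDR A) ∧
      ∃ A : Fin n → Finset ℕ, IsTNFamily 1 A ∧ numSDR A = n + 1 :=
  M_one_n_general n
end

section
/- Let F be a valued (t,n)-family with valuation (a_1,...,a_n) and let {x,y} be an exclusive pair. Define A_i(x,y) = (A_i \ {x}) ∪ {y} if i ∈ I_x ∩ I_y^c, and A_i(x,y) = A_i otherwise. Then for any I ⊆ {1,...,n}: |⋃_{i∈I} A_i(x,y)| = |⋃_{i∈I} A_i| − 1 if I ∩ I_x ∩ I_y = ∅, I ∩ I_x ∩ I_y^c ≠ ∅ and I ∩ I_x^c ∩ I_y ≠ ∅; and |⋃_{i∈I} A_i(x,y)| = |⋃_{i∈I} A_i| otherwise. -/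
open Finset

/-!
Write `S = ⋃_{i∈I} A_i`. Swapping `x` for `y` only affects the elements `x` and `y`: afterwards
`x` lies in `A_i` exactly when both `x` and `y` did, and `y` exactly when one of them did. Hence the
union changes only when some `A_i` (`i ∈ I`) gets swapped while none contains both `x` and `y`;
then it becomes `(S \ {x}) ∪ {y}`, which has one element fewer than `S` exactly when `y` was already
in `S`, i.e. when some `A_i` contains `y` but not `x`.
-/

section Ix

variable {n : ℕ} {A : Fin n → Finset ℕ} {x y : ℕ} {I : Finset (Fin n)}

@[simp]
lemma mem_Ix {i : Fin n} : i ∈ Ix A x ↔ x ∈ A i := by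
  simp [Ix]

lemma mem_biUnion_of_inter_Ix_nonempty (h : (I ∩ Ix A x).Nonempty) : x ∈ I.biUnion A := by
  obtain ⟨p, hp⟩ := h
  simp only [mem_inter, mem_Ix] at hp
  exact mem_biUnion.2 ⟨p, hp⟩

lemma mem_biUnion_iff_inter_sdiff_nonempty (hK : I ∩ Ix A x ∩ Ix A y = ∅) :
    y ∈ I.biUnion A ↔ (I ∩ (Ix A y \ Ix A x)).Nonempty := by
  simp only [mem_biUnion, Finset.Nonempty, mem_inter, mem_sdiff, mem_Ix]
  refine exists_congr fun i => ⟨fun ⟨hi, hyi⟩ => ⟨hi, hyi, fun hxi => ?_⟩, fun h => ⟨h.1, h.2.1⟩⟩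
  exact notMem_empty i (hK ▸ by simp [hi, hxi, hyi])

end Ix

namespace swapFam

variable {n : ℕ} (A : Fin n → Finset ℕ) (x y : ℕ)

lemma apply_of_notMem_sdiff {i : Fin n} (h : i ∉ Ix A x \ Ix A y) : swapFam A x y i = A i := by
  simp_all [swapFam]

lemma left_mem_iff (i : Fin n) : x ∈ swapFam A x y i ↔ x ∈ A i ∧ y ∈ A i := by
  unfold swapFam
  split_ifs with h
  · rcases eq_or_ne x y with rfl | hxy
    · exact absurd h.1 h.2
    · simp [hxy, h.2]
  · tauto

lemma right_mem_iff (i : Fin n) : y ∈ swapFam A x y i ↔ x ∈ A i ∨ y ∈ A i := by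
  unfold swapFam
  split_ifs with h
  · simp [h.1]
  · tauto

lemma mem_iff_of_ne {z : ℕ} (hx : z ≠ x) (hy : z ≠ y) (i : Fin n) :
    z ∈ swapFam A x y i ↔ z ∈ A i := by
  unfold swapFam
  split_ifs <;> simp [hx, hy]

variable {A x y} {I : Finset (Fin n)}

lemma biUnion_eq_of_inter_sdiff_eq_empty (h : I ∩ (Ix A x \ Ix A y) = ∅) :
    I.biUnion (swapFam A x y) = I.biUnion A :=
  biUnion_congr rfl fun i hi =>
    apply_of_notMem_sdiff A x y fun hi' => notMem_empty i (h ▸ mem_inter.2 ⟨hi, hi'⟩)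

lemma biUnion_eq_of_inter_nonempty (h : (I ∩ Ix A x ∩ Ix A y).Nonempty) :
    I.biUnion (swapFam A x y) = I.biUnion A := by
  obtain ⟨r, hr⟩ := h
  simp only [mem_inter, mem_Ix] at hr
  ext z
  simp only [mem_biUnion]
  by_cases hzx : z = x
  · subst hzx
    simp only [left_mem_iff]
    exact ⟨fun ⟨i, hi, hxi, _⟩ => ⟨i, hi, hxi⟩, fun _ => ⟨r, hr.1.1, hr.1.2, hr.2⟩⟩
  by_cases hzy : z = y
  · subst hzy
    simp only [right_mem_iff]
    exact ⟨fun _ => ⟨r, hr.1.1, hr.2⟩, fun ⟨i, hi, hzi⟩ => ⟨i, hi, Or.inr hzi⟩⟩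
  · simp only [mem_iff_of_ne A x y hzx hzy]

lemma biUnion_eq_insert_erase (hK : I ∩ Ix A x ∩ Ix A y = ∅)
    (hJ : (I ∩ (Ix A x \ Ix A y)).Nonempty) :
    I.biUnion (swapFam A x y) = insert y ((I.biUnion A).erase x) := by
  obtain ⟨p, hp⟩ := hJ
  simp only [mem_inter, mem_sdiff, mem_Ix] at hp
  have hK' : ∀ i ∈ I, x ∈ A i → y ∉ A i := fun i hi hxi hyi =>
    notMem_empty i (hK ▸ by simp [hi, hxi, hyi])
  ext z
  simp only [mem_biUnion, mem_insert, mem_erase]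
  by_cases hzy : z = y
  · subst hzy
    simp only [right_mem_iff, true_or, iff_true]
    exact ⟨p, hp.1, Or.inl hp.2.1⟩
  by_cases hzx : z = x
  · subst hzx
    simp only [left_mem_iff, hzy, ne_eq, not_true_eq_false, false_and, or_self, iff_false]
    exact fun ⟨i, hi, hzi, hyi⟩ => hK' i hi hzi hyi
  · simp only [mem_iff_of_ne A x y hzx hzy, hzy, hzx, ne_eq, not_false_eq_true, true_and,
      false_or]

end swapFam

theorem union_card_swapFam_general (n : ℕ) (A : Fin n → Finset ℕ) (x y : ℕ) :
    (∀ I : Finset (Fin n),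
        (I ∩ Ix A x ∩ Ix A y = ∅ ∧ (I ∩ (Ix A x \ Ix A y)).Nonempty ∧
          (I ∩ (Ix A y \ Ix A x)).Nonempty) →
        (I.biUnion (swapFam A x y)).card = (I.biUnion A).card - 1) ∧
      ∀ I : Finset (Fin n),
        ¬(I ∩ Ix A x ∩ Ix A y = ∅ ∧ (I ∩ (Ix A x \ Ix A y)).Nonempty ∧
          (I ∩ (Ix A y \ Ix A x)).Nonempty) →
        (I.biUnion (swapFam A x y)).card = (I.biUnion A).card := by
  have hx {I : Finset (Fin n)} (hJ : (I ∩ (Ix A x \ Ix A y)).Nonempty) : x ∈ I.biUnion A :=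
    mem_biUnion_of_inter_Ix_nonempty (hJ.mono (inter_subset_inter_left sdiff_subset))
  refine ⟨fun I ⟨hK, hJ, hL⟩ => ?_, fun I h => ?_⟩
  · have hxy : y ≠ x := fun h => by
      obtain ⟨q, hq⟩ := hL
      simp [h] at hq
    rw [swapFam.biUnion_eq_insert_erase hK hJ,
      insert_eq_of_mem (mem_erase.2 ⟨hxy, (mem_biUnion_iff_inter_sdiff_nonempty hK).2 hL⟩),
      card_erase_of_mem (hx hJ)]
  · by_cases hJ : (I ∩ (Ix A x \ Ix A y)).Nonempty
    · by_cases hK : I ∩ Ix A x ∩ Ix A y = ∅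
      · have hy : y ∉ I.biUnion A := fun hy =>
          h ⟨hK, hJ, (mem_biUnion_iff_inter_sdiff_nonempty hK).1 hy⟩
        rw [swapFam.biUnion_eq_insert_erase hK hJ,
          card_insert_of_notMem (fun hy' => hy (mem_of_mem_erase hy')), card_erase_add_one (hx hJ)]
      · rw [swapFam.biUnion_eq_of_inter_nonempty (nonempty_iff_ne_empty.2 hK)]
    · rw [swapFam.biUnion_eq_of_inter_sdiff_eq_empty (not_nonempty_iff_eq_empty.1 hJ)]

theorem union_card_swapFam (t n : ℕ) (a : Fin n → ℕ) (A : Fin n → Finset ℕ)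
    (hF : IsValuedTN t a A) (x y : ℕ) (hxy : Exclusive A x y) :
    (∀ I : Finset (Fin n),
        (I ∩ Ix A x ∩ Ix A y = ∅ ∧ (I ∩ (Ix A x \ Ix A y)).Nonempty ∧
          (I ∩ (Ix A y \ Ix A x)).Nonempty) →
        (I.biUnion (swapFam A x y)).card = (I.biUnion A).card - 1) ∧
      ∀ I : Finset (Fin n),
        ¬(I ∩ Ix A x ∩ Ix A y = ∅ ∧ (I ∩ (Ix A x \ Ix A y)).Nonempty ∧
          (I ∩ (Ix A y \ Ix A x)).Nonempty) →
        (I.biUnion (swapFam A x y)).card = (I.biUnion A).card :=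
  union_card_swapFam_general n A x y
end

section
/- Let F be a valued (t,n)-family with valuation (a_1,...,a_n) and {x,y} an exclusive pair. The modified family F_y^x = (A_1(x,y),...,A_n(x,y)) (replace x by y in each A_i with i ∈ I_x ∩ I_y^c) is again a valued (t,n)-family with valuation (a_1,...,a_n) if and only if {x,y} is unsaturated for F. -/
open Finset

/-!
Replacing `x` by `y` keeps every set size and changes a union `⋃_{i ∈ I} A_i` only at `x` and
`y`: afterwards `x` is present iff some `A_i` held both, and `y` is present iff some `A_i` held
either. So the union shrinks exactly when `I` splits the pair (no `A_i` holds both, some holds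
`x`, some holds `y`), and then by exactly one element. Such an `I` has at least two indices, so
the modified family fails a union bound precisely when the old bound was tight on a splitting
`I`, i.e. when `{x, y}` is saturated.
-/

def Splits {n : ℕ} (A : Fin n → Finset ℕ) (x y : ℕ) (I : Finset (Fin n)) : Prop :=
  I ∩ Ix A x ∩ Ix A y = ∅ ∧ (I ∩ (Ix A x \ Ix A y)).Nonempty ∧ (I ∩ (Ix A y \ Ix A x)).Nonempty

section SwapFam

variable {n : ℕ} {A : Fin n → Finset ℕ} {x y : ℕ} {I : Finset (Fin n)}

theorem saturated_iff {t : ℕ} {a : Fin n → ℕ} :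
    Saturated t a A x y ↔ ∃ I, Splits A x y I ∧ (I.biUnion A).card = (∑ i ∈ I, a i) + t := by
  simp only [Saturated, Splits, and_assoc]

theorem mem_swapFam_left (i : Fin n) : x ∈ swapFam A x y i ↔ x ∈ A i ∧ y ∈ A i := by
  unfold swapFam
  split_ifs with h
  · have hxy : x ≠ y := fun hxy => h.2 (hxy ▸ h.1)
    simp [hxy, h.2]
  · tauto

theorem mem_swapFam_right (i : Fin n) : y ∈ swapFam A x y i ↔ x ∈ A i ∨ y ∈ A i := by
  unfold swapFam
  split_ifs with h
  · simp only [mem_insert, true_or, h.1]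
  · tauto

theorem mem_swapFam_of_ne {z : ℕ} (hzx : z ≠ x) (hzy : z ≠ y) (i : Fin n) :
    z ∈ swapFam A x y i ↔ z ∈ A i := by
  unfold swapFam
  split_ifs <;> simp [hzx, hzy]

theorem card_swapFam (i : Fin n) : (swapFam A x y i).card = (A i).card := by
  unfold swapFam
  split_ifs with h
  · rw [card_insert_of_notMem (by simp [h.2]), card_sdiff_of_subset (by simpa using h.1),
      card_singleton, Nat.sub_add_cancel (card_pos.2 ⟨x, h.1⟩)]
  · rfl

theorem mem_biUnion_swapFam_left :
    x ∈ I.biUnion (swapFam A x y) ↔ ∃ i ∈ I, x ∈ A i ∧ y ∈ A i := by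
  simp only [mem_biUnion, mem_swapFam_left]

theorem mem_biUnion_swapFam_right :
    y ∈ I.biUnion (swapFam A x y) ↔ x ∈ I.biUnion A ∨ y ∈ I.biUnion A := by
  simp only [mem_biUnion, mem_swapFam_right, ← exists_or, ← and_or_left]

theorem erase_biUnion_subset_biUnion_swapFam :
    (I.biUnion A).erase x ⊆ I.biUnion (swapFam A x y) := by
  intro z hz
  obtain ⟨hzx, hzU⟩ := mem_erase.1 hz
  by_cases hzy : z = y
  · subst hzy
    exact mem_biUnion_swapFam_right.2 (Or.inr hzU)
  · obtain ⟨i, hi, hzi⟩ := mem_biUnion.1 hzU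
    exact mem_biUnion.2 ⟨i, hi, (mem_swapFam_of_ne hzx hzy i).2 hzi⟩

theorem splits_iff : Splits A x y I ↔
    x ∉ I.biUnion (swapFam A x y) ∧ x ∈ I.biUnion A ∧ y ∈ I.biUnion A := by
  rw [mem_biUnion_swapFam_left]
  simp only [Splits, mem_biUnion, Finset.ext_iff, Finset.Nonempty, mem_inter, mem_sdiff, Ix,
    mem_filter, mem_univ, true_and, notMem_empty, iff_false]
  grind

theorem Splits.two_le_card (h : Splits A x y I) : 2 ≤ I.card := by
  obtain ⟨-, ⟨i, hi⟩, ⟨j, hj⟩⟩ := h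
  simp only [mem_inter, mem_sdiff] at hi hj
  have hij : i ≠ j := by rintro rfl; exact hi.2.2 hj.2.1
  exact one_lt_card.2 ⟨i, hi.1, j, hj.1, hij⟩

theorem Splits.biUnion_swapFam_eq (h : Splits A x y I) :
    I.biUnion (swapFam A x y) = (I.biUnion A).erase x := by
  obtain ⟨hxV, hxU, hyU⟩ := splits_iff.1 h
  refine Subset.antisymm (fun z hz => ?_) erase_biUnion_subset_biUnion_swapFam
  have hzx : z ≠ x := by rintro rfl; exact hxV hz
  refine mem_erase.2 ⟨hzx, ?_⟩
  by_cases hzy : z = y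
  · exact hzy ▸ hyU
  · obtain ⟨i, hi, hzi⟩ := mem_biUnion.1 hz
    exact mem_biUnion.2 ⟨i, hi, (mem_swapFam_of_ne hzx hzy i).1 hzi⟩

theorem Splits.card_biUnion_swapFam_add_one (h : Splits A x y I) :
    (I.biUnion (swapFam A x y)).card + 1 = (I.biUnion A).card := by
  rw [h.biUnion_swapFam_eq, card_erase_add_one (splits_iff.1 h).2.1]

theorem card_biUnion_le_card_biUnion_swapFam (h : ¬ Splits A x y I) :
    (I.biUnion A).card ≤ (I.biUnion (swapFam A x y)).card := by
  rw [splits_iff] at h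
  by_cases hxU : x ∈ I.biUnion A
  · suffices hlt : (I.biUnion A).erase x ⊂ I.biUnion (swapFam A x y) by
      have hcard_lt := card_lt_card hlt
      rw [card_erase_of_mem hxU] at hcard_lt
      omega
    rw [ssubset_iff_of_subset erase_biUnion_subset_biUnion_swapFam]
    by_cases hxV : x ∈ I.biUnion (swapFam A x y)
    · exact ⟨x, hxV, notMem_erase x _⟩
    · have hyU : y ∉ I.biUnion A := fun hyU => h ⟨hxV, hxU, hyU⟩
      exact ⟨y, mem_biUnion_swapFam_right.2 (Or.inl hxU), fun hy => hyU (mem_of_mem_erase hy)⟩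
  · rw [← erase_eq_of_notMem hxU]
    exact card_le_card erase_biUnion_subset_biUnion_swapFam

end SwapFam

theorem swapFam_valued_iff_unsaturated_general (t n : ℕ) (a : Fin n → ℕ) (A : Fin n → Finset ℕ)
    (hF : IsValuedTN t a A) (x y : ℕ) :
    IsValuedTN t a (swapFam A x y) ↔ ¬ Saturated t a A x y := by
  obtain ⟨ha, hcard, hunion⟩ := hF
  rw [saturated_iff]
  constructor
  · rintro ⟨-, -, hunion'⟩ ⟨I, hI, htight⟩
    have hle := hunion' I hI.two_le_card
    have hdrop := hI.card_biUnion_swapFam_add_one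
    omega
  · intro hunsat
    refine ⟨ha, fun i => (card_swapFam i).trans (hcard i), fun I hI => ?_⟩
    by_cases hsplit : Splits A x y I
    · have hdrop := hsplit.card_biUnion_swapFam_add_one
      have hslack : (I.biUnion A).card ≠ (∑ i ∈ I, a i) + t := fun htight =>
        hunsat ⟨I, hsplit, htight⟩
      have hbound := hunion I hI
      omega
    · exact (hunion I hI).trans (card_biUnion_le_card_biUnion_swapFam hsplit)

theorem swapFam_valued_iff_unsaturated (t n : ℕ) (a : Fin n → ℕ) (A : Fin n → Finset ℕ)
    (hF : IsValuedTN t a A) (x y : ℕ) (hxy : Exclusive A x y) :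
    IsValuedTN t a (swapFam A x y) ↔ ¬ Saturated t a A x y :=
  swapFam_valued_iff_unsaturated_general t n a A hF x y
end

section
/- Let t ≥ 2 and let F be a valued (t,n)-family with valuation (a_1,...,a_n) containing an unsaturated exclusive pair {x,y}. Then the modified family F_y^x (replacing x by y in every A_i with i ∈ I_x ∩ I_y^c) satisfies N(F_y^x) < N(F). -/
/-!
Exchanging `x` and `y` back maps the SDRs of `F_y^x` injectively into those of `F`: an SDR of
`F_y^x` that takes `y` from some `A_i`, `i ∈ I_x \ I_y`, becomes after the exchange an SDR of `F`
taking `x` at such an index, and every other SDR of `F_y^x` is already an SDR of `F` that does not.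
No SDR `g` of `F` with `g i = x`, `g j = y` for `i ∈ I_x \ I_y`, `j ∈ I_y \ I_x` is hit, and one
exists by Hall's theorem: pinning `i ↦ x`, `j ↦ y` removes at most two elements from the union of
the remaining sets, which the `(t, n)`-property with `t ≥ 2` affords.
-/

open Finset

section Hall

variable {ι α : Type*} [Fintype ι] [DecidableEq ι] [DecidableEq α]

/-- Hall's theorem for `k ↦ {p k}` on `P` and `k ↦ A k \ p '' P` off `P`. -/
theorem exists_injective_mem_eqOn_of_card_add_le (A : ι → Finset α) (P : Finset ι) (p : ι → α)
    (hp : Set.InjOn p P) (hpA : ∀ k ∈ P, p k ∈ A k)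
    (hA : ∀ s : Finset ι, Disjoint s P → s.Nonempty → s.card + P.card ≤ (s.biUnion A).card) :
    ∃ f : ι → α, Function.Injective f ∧ (∀ k, f k ∈ A k) ∧ Set.EqOn f p P := by
  set B : ι → Finset α := fun k => if k ∈ P then {p k} else A k \ P.image p
  have hall (s : Finset ι) : s.card ≤ (s.biUnion B).card := by
    set s₁ := s.filter (· ∈ P)
    set s₂ := s.filter (· ∉ P)
    have h₁ : s₁.biUnion B = s₁.image p := by
      ext u; simp only [mem_biUnion, mem_image, mem_filter, s₁]
      exact exists_congr fun k => and_congr_right fun hk => by simp [B, hk.2, eq_comm]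
    have h₂ : s₂.biUnion B = s₂.biUnion A \ P.image p := by
      rw [biUnion_congr rfl fun k hk => if_neg (mem_filter.mp hk).2]
      ext u; simp only [mem_biUnion, mem_sdiff]
      exact ⟨fun ⟨k, hk, hu, hu'⟩ => ⟨⟨k, hk, hu⟩, hu'⟩, fun ⟨⟨k, hk, hu⟩, hu'⟩ => ⟨k, hk, hu, hu'⟩⟩
    have hcard₁ : (s₁.image p).card = s₁.card :=
      card_image_of_injOn (hp.mono fun k hk => (mem_filter.mp hk).2)
    have hcard₂ : s₂.card ≤ (s₂.biUnion A \ P.image p).card := by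
      rcases s₂.eq_empty_or_nonempty with h | h
      · simp [h]
      · have := hA s₂ (disjoint_left.mpr fun k hk => (mem_filter.mp hk).2) h
        have := le_card_sdiff (P.image p) (s₂.biUnion A)
        have := card_image_le (s := P) (f := p)
        omega
    have hdisj : Disjoint (s₁.image p) (s₂.biUnion A \ P.image p) :=
      disjoint_sdiff.mono_left (image_subset_image fun k hk => (mem_filter.mp hk).2)
    calc s.card = s₁.card + s₂.card := (card_filter_add_card_filter_not _).symm
      _ ≤ (s₁.biUnion B ∪ s₂.biUnion B).card := by
        rw [h₁, h₂, card_union_of_disjoint hdisj]; omega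
      _ = (s.biUnion B).card := by rw [← union_biUnion, filter_union_filter_not_eq]
  obtain ⟨f, hf, hfB⟩ := (all_card_le_biUnion_card_iff_existsInjective' B).mp hall
  have hfp : Set.EqOn f p P := fun k hk => by simpa [B, mem_coe.mp hk] using hfB k
  refine ⟨f, hf, fun k => ?_, hfp⟩
  by_cases hk : k ∈ P
  · exact hfp hk ▸ hpA k hk
  · exact (mem_sdiff.mp (by simpa only [B, hk, ↓reduceIte] using hfB k)).1

end Hall

abbrev sdrs {n : ℕ} (A : Fin n → Finset ℕ) : Finset (Fin n → ℕ) :=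
  (Fintype.piFinset A).filter Function.Injective

theorem mem_sdrs {n : ℕ} {A : Fin n → Finset ℕ} {f : Fin n → ℕ} :
    f ∈ sdrs A ↔ (∀ k, f k ∈ A k) ∧ Function.Injective f := by
  simp [sdrs]

theorem IsValuedTN.isTNFamily {t n : ℕ} {a : Fin n → ℕ} {A : Fin n → Finset ℕ}
    (hF : IsValuedTN t a A) : IsTNFamily t A := by
  obtain ⟨ha, hcard, hval⟩ := hF
  intro s hs
  rcases Nat.lt_or_ge s.card 2 with h | h
  · obtain ⟨k, rfl⟩ := card_eq_one.mp (show s.card = 1 by have := hs.card_pos; lia)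
    simp [hcard k, Nat.one_le_iff_ne_zero.mpr (ha k).ne', add_comm]
  · calc s.card + t ≤ (∑ i ∈ s, a i) + t := by
          gcongr; simpa using card_nsmul_le_sum s a 1 fun i _ => ha i
      _ ≤ _ := hval s h

theorem IsTNFamily.exists_mem_sdrs_of_pair {t n : ℕ} {A : Fin n → Finset ℕ} (hA : IsTNFamily t A)
    (ht : 2 ≤ t) {i j : Fin n} {x y : ℕ} (hij : i ≠ j) (hxy : x ≠ y) (hx : x ∈ A i)
    (hy : y ∈ A j) : ∃ g ∈ sdrs A, g i = x ∧ g j = y := by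
  set p : Fin n → ℕ := fun k => if k = i then x else y
  have hp : Set.InjOn p ({i, j} : Finset (Fin n)) := by
    simp [p, hij.symm, hxy]
  have hpA : ∀ k ∈ ({i, j} : Finset (Fin n)), p k ∈ A k := by
    simp [p, hx, hij.symm, hy]
  have hcard : ∀ s : Finset (Fin n), Disjoint s {i, j} → s.Nonempty →
      s.card + ({i, j} : Finset (Fin n)).card ≤ (s.biUnion A).card := by
    intro s _ hs
    have := hA s hs
    rw [card_pair hij]; omega
  obtain ⟨g, hg, hgA, hgp⟩ := exists_injective_mem_eqOn_of_card_add_le A {i, j} p hp hpA hcard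
  refine ⟨g, mem_sdrs.mpr ⟨hgA, hg⟩, ?_, ?_⟩
  · simpa [p] using hgp (mem_insert_self i {j})
  · simpa [p, hij.symm] using hgp (mem_insert_of_mem (mem_singleton_self j))

section Swap

variable {n : ℕ} {A : Fin n → Finset ℕ} {x y u : ℕ} {k : Fin n}

theorem swapFam_subset_insert : swapFam A x y k ⊆ insert y (A k) := by
  unfold swapFam; split_ifs
  · exact insert_subset_insert _ sdiff_subset
  · exact subset_insert _ _

theorem swapFam_eq_of_not (h : ¬(x ∈ A k ∧ y ∉ A k)) : swapFam A x y k = A k :=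
  if_neg h

theorem left_notMem_swapFam (hx : x ∈ A k) (hy : y ∉ A k) : x ∉ swapFam A x y k := by
  have : x ≠ y := by rintro rfl; exact hy hx
  simp [swapFam, hx, hy, this]

theorem mem_of_mem_swapFam (hu : u ∈ swapFam A x y k) (h : x ∈ A k ∧ y ∉ A k → u ≠ y) :
    u ∈ A k := by
  by_cases hD : x ∈ A k ∧ y ∉ A k
  · exact (mem_insert.mp (swapFam_subset_insert hu)).resolve_left (h hD)
  · rwa [swapFam_eq_of_not hD] at hu

def unswap (A : Fin n → Finset ℕ) (x y : ℕ) (f : Fin n → ℕ) : Fin n → ℕ :=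
  if ∃ k, (x ∈ A k ∧ y ∉ A k) ∧ f k = y then Equiv.swap x y ∘ f else f

theorem unswap_eq_of_exists {f : Fin n → ℕ} (h : ∃ k, (x ∈ A k ∧ y ∉ A k) ∧ f k = y) :
    unswap A x y f = Equiv.swap x y ∘ f :=
  if_pos h

theorem unswap_eq_of_not_exists {f : Fin n → ℕ} (h : ¬∃ k, (x ∈ A k ∧ y ∉ A k) ∧ f k = y) :
    unswap A x y f = f :=
  if_neg h

theorem unswap_mem_sdrs {f : Fin n → ℕ} (hf : f ∈ sdrs (swapFam A x y)) :
    unswap A x y f ∈ sdrs A := by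
  obtain ⟨hfA, hf⟩ := mem_sdrs.mp hf
  by_cases hP : ∃ k, (x ∈ A k ∧ y ∉ A k) ∧ f k = y
  · rw [unswap_eq_of_exists hP]
    obtain ⟨k₀, ⟨hx₀, -⟩, hfk₀⟩ := hP
    refine mem_sdrs.mpr ⟨fun k => ?_, (Equiv.injective _).comp hf⟩
    by_cases hky : f k = y
    · obtain rfl := hf (hky.trans hfk₀.symm)
      simpa [hky] using hx₀
    by_cases hkx : f k = x
    · have hD : ¬(x ∈ A k ∧ y ∉ A k) := fun hD =>
        left_notMem_swapFam hD.1 hD.2 (hkx ▸ hfA k)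
      have hxk : x ∈ A k := swapFam_eq_of_not hD ▸ hkx ▸ hfA k
      simpa [hkx] using not_and_not_right.mp hD hxk
    · simpa [Equiv.swap_apply_of_ne_of_ne hkx hky] using mem_of_mem_swapFam (hfA k) fun _ => hky
  · rw [unswap_eq_of_not_exists hP]
    push Not at hP
    exact mem_sdrs.mpr ⟨fun k => mem_of_mem_swapFam (hfA k) (hP k), hf⟩

/-- `unswap` records in its output whether it exchanged `x` and `y`. -/
theorem exists_unswap_eq_left_iff {f : Fin n → ℕ} (hf : f ∈ sdrs (swapFam A x y)) :
    (∃ k, (x ∈ A k ∧ y ∉ A k) ∧ unswap A x y f k = x) ↔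
      ∃ k, (x ∈ A k ∧ y ∉ A k) ∧ f k = y := by
  by_cases hP : ∃ k, (x ∈ A k ∧ y ∉ A k) ∧ f k = y
  · obtain ⟨k, hD, hfk⟩ := hP
    exact iff_of_true ⟨k, hD, by simp [unswap_eq_of_exists ⟨k, hD, hfk⟩, hfk]⟩ ⟨k, hD, hfk⟩
  · simp only [hP, iff_false, unswap_eq_of_not_exists hP, not_exists, not_and]
    exact fun k hD hfk => left_notMem_swapFam hD.1 hD.2 (hfk ▸ (mem_sdrs.mp hf).1 k)

theorem unswap_injOn : Set.InjOn (unswap A x y) (sdrs (swapFam A x y)) := by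
  intro f₁ hf₁ f₂ hf₂ h
  have hP := (exists_unswap_eq_left_iff hf₁).symm.trans (h ▸ exists_unswap_eq_left_iff hf₂)
  by_cases hP₁ : ∃ k, (x ∈ A k ∧ y ∉ A k) ∧ f₁ k = y
  · rw [unswap_eq_of_exists hP₁, unswap_eq_of_exists (hP.mp hP₁)] at h
    exact (Equiv.injective _).comp_left h
  · rwa [unswap_eq_of_not_exists hP₁, unswap_eq_of_not_exists (hP₁ ∘ hP.mpr)] at h

theorem unswap_ne {f g : Fin n → ℕ} (hf : f ∈ sdrs (swapFam A x y)) {i j : Fin n}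
    (hxi : x ∈ A i) (hyi : y ∉ A i) (hxj : x ∉ A j) (hgi : g i = x) (hgj : g j = y) :
    unswap A x y f ≠ g := by
  rintro rfl
  have hP := (exists_unswap_eq_left_iff hf).mp ⟨i, ⟨hxi, hyi⟩, hgi⟩
  rw [unswap_eq_of_exists hP] at hgj
  have hfj : f j = x := by simpa using congrArg (Equiv.swap x y) hgj
  exact hxj (mem_of_mem_swapFam (hfj ▸ (mem_sdrs.mp hf).1 j) fun hD => absurd hD.1 hxj)

theorem numSDR_swapFam_lt_of_mem_sdrs {g : Fin n → ℕ} (hg : g ∈ sdrs A) {i j : Fin n}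
    (hxi : x ∈ A i) (hyi : y ∉ A i) (hxj : x ∉ A j) (hgi : g i = x) (hgj : g j = y) :
    numSDR (swapFam A x y) < numSDR A :=
  calc numSDR (swapFam A x y) ≤ ((sdrs A).erase g).card :=
        card_le_card_of_injOn (unswap A x y)
          (fun _ hf => mem_erase.mpr ⟨unswap_ne hf hxi hyi hxj hgi hgj, unswap_mem_sdrs hf⟩)
          unswap_injOn
    _ < numSDR A := card_erase_lt_of_mem hg

end Swap

theorem numSDR_swapFam_lt_general (t n : ℕ) (ht : 2 ≤ t) (a : Fin n → ℕ) (A : Fin n → Finset ℕ)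
    (hF : IsValuedTN t a A) (x y : ℕ) (hxy : Exclusive A x y) :
    numSDR (swapFam A x y) < numSDR A := by
  obtain ⟨⟨i, hi⟩, ⟨j, hj⟩⟩ := hxy
  simp only [Ix, mem_sdiff, mem_filter, mem_univ, true_and] at hi hj
  obtain ⟨g, hg, hgi, hgj⟩ := hF.isTNFamily.exists_mem_sdrs_of_pair ht
    (by rintro rfl; exact hj.2 hi.1) (by rintro rfl; exact hi.2 hi.1) hi.1 hj.1
  exact numSDR_swapFam_lt_of_mem_sdrs hg hi.1 hi.2 hj.2 hgi hgj

theorem numSDR_swapFam_lt (t n : ℕ) (ht : 2 ≤ t) (a : Fin n → ℕ) (A : Fin n → Finset ℕ)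
    (hF : IsValuedTN t a A) (x y : ℕ) (hxy : Exclusive A x y)
    (hsat : ¬ Saturated t a A x y) :
    numSDR (swapFam A x y) < numSDR A :=
  numSDR_swapFam_lt_general t n ht a A hF x y hxy
end

section
/- Let F be a valued (t,n)-family with valuation (a_1,...,a_n). Define the relation i ∼ j on {1,...,n} by: i ∼ j iff there exists I ⊆ {1,...,n} with {i,j} ⊆ I and |⋃_{s∈I} A_s| = ∑_{s∈I} a_s + t. Then ∼ is an equivalence relation. -/
open Finset

theorem card_biUnion_union_add_card_biUnion_inter_le {ι α : Type*} [DecidableEq ι] [DecidableEq α]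
    (A : ι → Finset α) (I J : Finset ι) :
    ((I ∪ J).biUnion A).card + ((I ∩ J).biUnion A).card ≤
      (I.biUnion A).card + (J.biUnion A).card := by
  have hinter : (I ∩ J).biUnion A ⊆ I.biUnion A ∩ J.biUnion A :=
    subset_inter (biUnion_subset_biUnion_of_subset_left A inter_subset_left)
      (biUnion_subset_biUnion_of_subset_left A inter_subset_right)
  calc ((I ∪ J).biUnion A).card + ((I ∩ J).biUnion A).card
      ≤ (I.biUnion A ∪ J.biUnion A).card + (I.biUnion A ∩ J.biUnion A).card := by
        rw [union_biUnion]; gcongr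
    _ = (I.biUnion A).card + (J.biUnion A).card := card_union_add_card_inter _ _

namespace IsValuedTN

variable {t n : ℕ} {a : Fin n → ℕ} {A : Fin n → Finset ℕ}

theorem sum_add_le_card_biUnion (hF : IsValuedTN t a A) {I : Finset (Fin n)} (hI : I.Nonempty) :
    (∑ s ∈ I, a s) + t ≤ (I.biUnion A).card := by
  obtain ⟨i, rfl⟩ | hI2 := hI.exists_eq_singleton_or_nontrivial
  · simp [hF.2.1 i]
  · exact hF.2.2 I (one_lt_card_iff_nontrivial.mpr hI2)

/-- By submodularity, the excess `|⋃ A| - ∑ a - t` of `I ∪ J` is at most the excesses of `I` and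
`J` minus that of `I ∩ J`, and the latter is nonnegative because `I ∩ J` is nonempty. -/
theorem card_biUnion_union_eq (hF : IsValuedTN t a A) {I J : Finset (Fin n)}
    (hI : (I.biUnion A).card = (∑ s ∈ I, a s) + t) (hJ : (J.biUnion A).card = (∑ s ∈ J, a s) + t)
    (hIJ : (I ∩ J).Nonempty) :
    ((I ∪ J).biUnion A).card = (∑ s ∈ I ∪ J, a s) + t := by
  have hsub := card_biUnion_union_add_card_biUnion_inter_le A I J
  have hlower_inter := hF.sum_add_le_card_biUnion hIJ
  have hlower_union := hF.sum_add_le_card_biUnion (hIJ.mono inter_subset_union)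
  have hsum : (∑ s ∈ I ∪ J, a s) + (∑ s ∈ I ∩ J, a s) = (∑ s ∈ I, a s) + ∑ s ∈ J, a s :=
    sum_union_inter
  omega

end IsValuedTN

theorem sim_equivalence (t n : ℕ) (a : Fin n → ℕ) (A : Fin n → Finset ℕ)
    (hF : IsValuedTN t a A) :
    Equivalence (fun i j : Fin n => ∃ I : Finset (Fin n),
      i ∈ I ∧ j ∈ I ∧ (I.biUnion A).card = (∑ s ∈ I, a s) + t) := by
  refine ⟨fun i => ?_, fun ⟨I, hi, hj, hI⟩ => ⟨I, hj, hi, hI⟩, ?_⟩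
  · exact ⟨{i}, mem_singleton_self i, mem_singleton_self i, by simp [hF.2.1 i]⟩
  · rintro i j k ⟨I, hiI, hjI, hI⟩ ⟨J, hjJ, hkJ, hJ⟩
    exact ⟨I ∪ J, mem_union_left J hiI, mem_union_right I hkJ,
      hF.card_biUnion_union_eq hI hJ ⟨j, mem_inter.mpr ⟨hjI, hjJ⟩⟩⟩
end

section
/- Let F be a valued (t,n)-family with valuation (a_1,...,a_n) such that |⋃_{i=1}^n A_i| = ∑_{i=1}^n a_i + t and for every proper subset J ⊊ {1,...,n} with |J| ≥ 2 one has |⋃_{i∈J} A_i| > ∑_{i∈J} a_i + t. Then an exclusive pair {x,y} is saturated for F if and only if I_x ∩ I_y = ∅. -/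
open Finset

lemma eq_univ_of_tight {ι α : Type*} [Fintype ι] [DecidableEq α] {t : ℕ} {a : ι → ℕ}
    {A : ι → Finset α} (hproper : ∀ J : Finset ι, J ⊂ univ → 2 ≤ J.card →
      (∑ i ∈ J, a i) + t < (J.biUnion A).card)
    {I : Finset ι} (hI : 2 ≤ I.card) (htight : (I.biUnion A).card = (∑ i ∈ I, a i) + t) :
    I = univ := by
  by_contra hne
  have := hproper I (ssubset_univ_iff.mpr hne) hI
  omega

lemma two_le_card_of_inter_sdiff_nonempty {α : Type*} [DecidableEq α] {I S T : Finset α}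
    (hST : (I ∩ (S \ T)).Nonempty) (hTS : (I ∩ (T \ S)).Nonempty) : 2 ≤ I.card := by
  obtain ⟨i, hi⟩ := hST
  obtain ⟨j, hj⟩ := hTS
  obtain ⟨hiI, -, hiT⟩ : i ∈ I ∧ i ∈ S ∧ i ∉ T := by simpa only [mem_inter, mem_sdiff] using hi
  obtain ⟨hjI, hjT, -⟩ : j ∈ I ∧ j ∈ T ∧ j ∉ S := by simpa only [mem_inter, mem_sdiff] using hj
  exact one_lt_card.mpr ⟨i, hiI, j, hjI, fun hij => hiT (hij ▸ hjT)⟩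

theorem saturated_iff_disjoint_general (t n : ℕ) (a : Fin n → ℕ) (A : Fin n → Finset ℕ)
    (htotal : ((Finset.univ : Finset (Fin n)).biUnion A).card = (∑ i, a i) + t)
    (hproper : ∀ J : Finset (Fin n), J ⊂ Finset.univ → 2 ≤ J.card →
      (∑ i ∈ J, a i) + t < (J.biUnion A).card)
    (x y : ℕ) (hxy : Exclusive A x y) :
    Saturated t a A x y ↔ Ix A x ∩ Ix A y = ∅ := by
  constructor
  · rintro ⟨I, hdisj, hx, hy, htight⟩
    obtain rfl := eq_univ_of_tight hproper (two_le_card_of_inter_sdiff_nonempty hx hy) htight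
    rwa [univ_inter] at hdisj
  · intro hdisj
    exact ⟨univ, by rwa [univ_inter], by simpa using hxy.1, by simpa using hxy.2, htotal⟩

theorem saturated_iff_disjoint (t n : ℕ) (a : Fin n → ℕ) (A : Fin n → Finset ℕ)
    (hF : IsValuedTN t a A)
    (htotal : ((Finset.univ : Finset (Fin n)).biUnion A).card = (∑ i, a i) + t)
    (hproper : ∀ J : Finset (Fin n), J ⊂ Finset.univ → 2 ≤ J.card →
      (∑ i ∈ J, a i) + t < (J.biUnion A).card)
    (x y : ℕ) (hxy : Exclusive A x y) :
    Saturated t a A x y ↔ Ix A x ∩ Ix A y = ∅ :=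
  saturated_iff_disjoint_general t n a A htotal hproper x y hxy
end
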